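/- Let e : [0,∞) → ℝⁿ be absolutely continuous with derivative ė(t) = r(t) − α e(t) for α > 0, and let N_B : [0,∞) → ℝⁿ be continuously differentiable with ‖N_B(t)‖ ≤ γ₁ and ‖Ṅ_B(t)‖ ≤ γ₂ for all t. Define L(t) = r(t)ᵀ(N_B(t) − β sgn(e(t))) (with sgn applied componentwise) and P(t) = β Σᵢ|eᵢ(0)| − e(0)ᵀN_B(0) − ∫₀ᵗ L(s) ds. If β > γ₁ + γ₂/α, then P(t) ≥ 0 for all t ≥ 0. -/

import Mathlib

/-!
The boundary term `g s = β ∑ᵢ |eᵢ s| - ∑ᵢ eᵢ s * N_B,ᵢ s` of the integration by parts is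
nonnegative, since `|N_B,ᵢ| ≤ γ₁ < β`. Away from the countably many transversal zeros of the
`eᵢ`, its right derivative is `β ∑ᵢ sgn(eᵢ) ėᵢ - ė ⬝ N_B - e ⬝ Ṅ_B`; substituting `ė = r - α e`
gives `g' + L = α e ⬝ N_B - α β ‖e‖₁ - e ⬝ Ṅ_B ≤ (α γ₁ + γ₂ - α β) ‖e‖₁ ≤ 0`. The right-derivative
form of the fundamental theorem of calculus then yields `g t - g 0 ≤ -∫₀ᵗ L`, that is,
`P t ≥ g t ≥ 0`.
-/

open Set MeasureTheory Filter

theorem Real.self_mul_sign (x : ℝ) : x * Real.sign x = |x| := by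
  rcases lt_trichotomy x 0 with h | rfl | h
  · rw [Real.sign_of_neg h, abs_of_neg h, mul_neg_one]
  · simp
  · rw [Real.sign_of_pos h, abs_of_pos h, mul_one]

theorem mul_le_abs_mul_of_abs_le {a b c : ℝ} (h : |b| ≤ c) : a * b ≤ |a| * c :=
  calc a * b ≤ |a * b| := le_abs_self _
    _ = |a| * |b| := abs_mul a b
    _ ≤ |a| * c := mul_le_mul_of_nonneg_left h (abs_nonneg a)

theorem HasDerivAt.hasDerivWithinAt_Ioi_abs_of_eq_zero {f : ℝ → ℝ} {f' x : ℝ}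
    (hf : HasDerivAt f f' x) (hx : f x = 0) :
    HasDerivWithinAt (fun t => |f t|) |f'| (Ioi x) x := by
  rw [hasDerivWithinAt_iff_isLittleO]
  refine Asymptotics.IsBigO.trans_isLittleO ?_
    ((hasDerivAt_iff_isLittleO.1 hf).mono nhdsWithin_le_nhds)
  refine Asymptotics.IsBigO.of_bound 1 ?_
  filter_upwards [self_mem_nhdsWithin] with y (hy : x < y)
  have hyx : (y - x) • |f'| = |(y - x) • f'| := by
    rw [smul_eq_mul, smul_eq_mul, abs_mul, abs_of_pos (sub_pos.2 hy)]
  simp only [hx, abs_zero, sub_zero, hyx, one_mul, Real.norm_eq_abs]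
  exact abs_abs_sub_abs_le_abs_sub _ _

theorem HasDerivAt.hasDerivWithinAt_Ioi_abs {f : ℝ → ℝ} {f' x : ℝ} (hf : HasDerivAt f f' x) :
    HasDerivWithinAt (fun t => |f t|) (if f x = 0 then |f'| else Real.sign (f x) * f')
      (Ioi x) x := by
  split_ifs with hx
  · exact hf.hasDerivWithinAt_Ioi_abs_of_eq_zero hx
  rcases lt_or_gt_of_ne hx with hneg | hpos
  · rw [Real.sign_of_neg hneg]
    exact ((hasDerivAt_abs_neg hneg).comp x hf).hasDerivWithinAt
  · rw [Real.sign_of_pos hpos]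
    exact ((hasDerivAt_abs_pos hpos).comp x hf).hasDerivWithinAt

theorem countable_setOf_eq_and_deriv_ne {f f' : ℝ → ℝ} (hf : ∀ x, HasDerivAt f (f' x) x)
    (c : ℝ) : {x | f x = c ∧ f' x ≠ 0}.Countable := by
  set Z := {x | f x = c ∧ f' x ≠ 0}
  refine (countable_setOfPred_isolated_right_within (s := Z)).mono fun x hx => ?_
  refine ⟨hx, ?_⟩
  have hZ : Z ∩ Ioi x ⊆ {x}ᶜ := fun y hy => (ne_of_gt hy.2 : y ≠ x)
  refine empty_mem_iff_bot.1 ?_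
  filter_upwards [nhdsWithin_mono x hZ ((hf x).eventually_ne (c := c) hx.2),
    self_mem_nhdsWithin] with y hyc hyZ
  exact hyc hyZ.1.1

theorem sub_le_integral_of_hasDeriv_right_of_ae_le {g g' φ : ℝ → ℝ} {a b : ℝ} (hab : a ≤ b)
    (hcont : ContinuousOn g (Icc a b))
    (hderiv : ∀ x ∈ Ioo a b, HasDerivWithinAt g (g' x) (Ioi x) x)
    (φint : IntervalIntegrable φ volume a b) (hφg : ∀ᵐ x, x ∈ Icc a b → g' x ≤ φ x) :
    g b - g a ≤ ∫ y in a..b, φ y := by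
  -- `max g' φ` dominates `g'` everywhere and agrees with `φ` almost everywhere.
  have hmax : ∀ᵐ x, x ∈ Icc a b → max (g' x) (φ x) = φ x :=
    hφg.mono fun x hx hxI => max_eq_right (hx hxI)
  have hint : IntegrableOn (fun x => max (g' x) (φ x)) (Icc a b) :=
    ((intervalIntegrable_iff_integrableOn_Icc_of_le hab).1 φint).congr_fun_ae
      ((ae_restrict_iff' measurableSet_Icc).2 (hmax.mono fun x hx hxI => (hx hxI).symm))
  calc g b - g a ≤ ∫ y in a..b, max (g' y) (φ y) :=
        intervalIntegral.sub_le_integral_of_hasDeriv_right_of_le hab hcont hderiv hint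
          fun x _ => le_max_left _ _
    _ = ∫ y in a..b, φ y := intervalIntegral.integral_congr_ae <|
        hmax.mono fun x hx hxI => hx (Ioc_subset_Icc_self (by rwa [uIoc_of_le hab] at hxI))

theorem rise_coord_nonpos {α β γ₁ γ₂ x d N N' : ℝ} (hα : 0 ≤ α) (hN : |N| ≤ γ₁)
    (hN' : |N'| ≤ γ₂) (hgain : α * γ₁ + γ₂ ≤ α * β) :
    (d + α * x) * (N - β * Real.sign x) + (β * (Real.sign x * d) - (d * N + x * N')) ≤ 0 := by
  have hexpand : (d + α * x) * (N - β * Real.sign x) + (β * (Real.sign x * d) - (d * N + x * N'))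
      = α * (x * N) - α * β * |x| - x * N' := by
    rw [← Real.self_mul_sign]; ring
  have hxN : α * (x * N) ≤ α * (|x| * γ₁) :=
    mul_le_mul_of_nonneg_left (mul_le_abs_mul_of_abs_le hN) hα
  have hxN' : -x * N' ≤ |x| * γ₂ := by simpa using mul_le_abs_mul_of_abs_le (a := -x) hN'
  have hgain' := mul_le_mul_of_nonneg_left hgain (abs_nonneg x)
  rw [hexpand]
  nlinarith

section RISE

variable {ι : Type*} [Fintype ι]

def riseBoundaryTerm (β : ℝ) (e NB : ℝ → ι → ℝ) (s : ℝ) : ℝ :=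
  β * ∑ i, |e s i| - ∑ i, e s i * NB s i

noncomputable def riseIntegrand (β : ℝ) (e r NB : ℝ → ι → ℝ) (s : ℝ) : ℝ :=
  ∑ i, r s i * (NB s i - β * Real.sign (e s i))

theorem riseBoundaryTerm_nonneg {β γ₁ s : ℝ} {e NB : ℝ → ι → ℝ} (hNB : ∀ i, |NB s i| ≤ γ₁)
    (hβ : γ₁ ≤ β) : 0 ≤ riseBoundaryTerm β e NB s := by
  have hle : ∑ i, e s i * NB s i ≤ ∑ i, |e s i| * β :=
    Finset.sum_le_sum fun i _ => mul_le_abs_mul_of_abs_le ((hNB i).trans hβ)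
  rw [← Finset.sum_mul] at hle
  unfold riseBoundaryTerm
  linarith

theorem riseBoundaryTerm_sub_le_integral {α β γ₁ γ₂ t : ℝ} {e r NB NB' : ℝ → ι → ℝ}
    (hα : 0 ≤ α) (he : ∀ s i, HasDerivAt (e · i) (r s i - α * e s i) s)
    (hNB : ∀ s i, HasDerivAt (NB · i) (NB' s i) s)
    (hNBbd : ∀ s, 0 ≤ s → ∀ i, |NB s i| ≤ γ₁) (hNB'bd : ∀ s, 0 ≤ s → ∀ i, |NB' s i| ≤ γ₂)
    (hgain : α * γ₁ + γ₂ ≤ α * β) (ht : 0 ≤ t)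
    (hint : IntervalIntegrable (riseIntegrand β e r NB) volume 0 t) :
    riseBoundaryTerm β e NB t - riseBoundaryTerm β e NB 0
      ≤ ∫ s in 0..t, -riseIntegrand β e r NB s := by
  set d : ℝ → ι → ℝ := fun s i => r s i - α * e s i
  set g' : ℝ → ℝ := fun s => β * ∑ i, (if e s i = 0 then |d s i| else Real.sign (e s i) * d s i)
    - ∑ i, (d s i * NB s i + e s i * NB' s i)
  have hderiv : ∀ s, HasDerivWithinAt (riseBoundaryTerm β e NB) (g' s) (Ioi s) s := fun s =>
    ((HasDerivWithinAt.fun_sum fun i _ => (he s i).hasDerivWithinAt_Ioi_abs).const_mul β).sub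
      (HasDerivWithinAt.fun_sum fun i _ => ((he s i).mul (hNB s i)).hasDerivWithinAt)
  have hcont : Continuous (riseBoundaryTerm β e NB) := by
    have hec : ∀ i, Continuous (e · i) := fun i =>
      continuous_iff_continuousAt.2 fun s => (he s i).continuousAt
    have hNBc : ∀ i, Continuous (NB · i) := fun i =>
      continuous_iff_continuousAt.2 fun s => (hNB s i).continuousAt
    unfold riseBoundaryTerm
    fun_prop
  -- Off the countable set where some `eᵢ` crosses zero transversally, `g'` uses `sign eᵢ * ėᵢ`.
  set S := ⋃ i, {s | e s i = 0 ∧ d s i ≠ 0}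
  have hS : S.Countable := countable_iUnion fun i => countable_setOf_eq_and_deriv_ne (he · i) 0
  have hbound : ∀ s ∉ S, 0 ≤ s → g' s ≤ -riseIntegrand β e r NB s := by
    intro s hs hs0
    have hsign : ∀ i, (if e s i = 0 then |d s i| else Real.sign (e s i) * d s i)
        = Real.sign (e s i) * d s i := by
      intro i
      split_ifs with h0
      · have hd0 : d s i = 0 := not_not.1 fun hd => hs (mem_iUnion.2 ⟨i, h0, hd⟩)
        rw [hd0, abs_zero, mul_zero]
      · rfl
    have hr : ∀ i, r s i = d s i + α * e s i := fun i => by simp [d]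
    have hsum : riseIntegrand β e r NB s + g' s = ∑ i, ((d s i + α * e s i)
        * (NB s i - β * Real.sign (e s i)) + (β * (Real.sign (e s i) * d s i)
          - (d s i * NB s i + e s i * NB' s i))) := by
      simp only [riseIntegrand, g', hsign, ← hr, Finset.mul_sum, Finset.sum_add_distrib,
        Finset.sum_sub_distrib]
    have hterms := Finset.sum_nonpos fun i (_ : i ∈ Finset.univ) =>
      rise_coord_nonpos (x := e s i) (d := d s i) hα (hNBbd s hs0 i) (hNB'bd s hs0 i) hgain
    linarith
  exact sub_le_integral_of_hasDeriv_right_of_ae_le ht hcont.continuousOn (fun s _ => hderiv s)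
    hint.neg ((hS.ae_notMem volume).mono fun s hs hsI => hbound s hs hsI.1)

end RISE

theorem stmt8_general {n : ℕ} (α β γ₁ γ₂ : ℝ) (hα : 0 < α)
    (e r NB NB' : ℝ → EuclideanSpace ℝ (Fin n))
    (he : ∀ t, HasDerivAt e (r t - α • e t) t)
    (hNB : ∀ t, HasDerivAt NB (NB' t) t)
    (hNBbd : ∀ t, 0 ≤ t → ‖NB t‖ ≤ γ₁)
    (hNB'bd : ∀ t, 0 ≤ t → ‖NB' t‖ ≤ γ₂)
    (L P : ℝ → ℝ)
    (hL : ∀ t, L t = ∑ i, r t i * (NB t i - β * Real.sign (e t i)))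
    (hP : ∀ t, P t = β * (∑ i, |e 0 i|) - (∑ i, e 0 i * NB 0 i) - ∫ s in (0:ℝ)..t, L s)
    (hgain : β > γ₁ + γ₂ / α) :
    ∀ t, 0 ≤ t → 0 ≤ P t := by
  intro t ht
  have hγ₂ : 0 ≤ γ₂ := (norm_nonneg _).trans (hNB'bd 0 le_rfl)
  have hβ : γ₁ ≤ β := by linarith [div_nonneg hγ₂ hα.le]
  have hgain' : α * γ₁ + γ₂ ≤ α * β := by
    have := mul_le_mul_of_nonneg_left hgain.le hα.le
    rwa [mul_add, mul_div_cancel₀ _ hα.ne'] at this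
  have hcoord_bd (f : ℝ → EuclideanSpace ℝ (Fin n)) (γ : ℝ) (hf : ∀ t, 0 ≤ t → ‖f t‖ ≤ γ) :
      ∀ t, 0 ≤ t → ∀ i, |f t i| ≤ γ := fun t ht i =>
    (PiLp.norm_apply_le (f t) i).trans (hf t ht)
  have hcoord_deriv {f f' : ℝ → EuclideanSpace ℝ (Fin n)} (hf : ∀ t, HasDerivAt f (f' t) t) :
      ∀ t i, HasDerivAt (f · i) (f' t i) t := fun t i =>
    (EuclideanSpace.proj (𝕜 := ℝ) i).hasFDerivAt.comp_hasDerivAt t (hf t)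
  have hL' : L = riseIntegrand β (e · ·) (r · ·) (NB · ·) := funext hL
  have hg_nonneg (s : ℝ) (hs : 0 ≤ s) : 0 ≤ riseBoundaryTerm β (e · ·) (NB · ·) s :=
    riseBoundaryTerm_nonneg (hcoord_bd NB γ₁ hNBbd s hs) hβ
  have hP' : P t = riseBoundaryTerm β (e · ·) (NB · ·) 0 - ∫ s in (0:ℝ)..t, L s := hP t
  rw [hP']
  by_cases hint : IntervalIntegrable L volume 0 t
  · have := riseBoundaryTerm_sub_le_integral hα.le (by simpa using hcoord_deriv he)
      (hcoord_deriv hNB) (hcoord_bd NB γ₁ hNBbd) (hcoord_bd NB' γ₂ hNB'bd) hgain' ht (hL' ▸ hint)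
    rw [intervalIntegral.integral_neg, ← hL'] at this
    linarith [hg_nonneg t ht]
  · -- the integral of a non-integrable function is `0`
    rw [intervalIntegral.integral_undef hint]
    linarith [hg_nonneg 0 le_rfl]

/-- RISE nonnegativity lemma: with r = ė + αe, ‖N_B‖ ≤ γ₁, ‖Ṅ_B‖ ≤ γ₂,
L = rᵀ(N_B − β sgn(e)) and
P(t) = β Σᵢ|eᵢ(0)| − e(0)ᵀN_B(0) − ∫₀ᵗ L, the gain condition
β > γ₁ + γ₂/α implies P(t) ≥ 0 for all t ≥ 0. -/
theorem stmt8 {n : ℕ} (α β γ₁ γ₂ : ℝ) (hα : 0 < α)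
    (e r NB NB' : ℝ → EuclideanSpace ℝ (Fin n))
    (he : ∀ t, HasDerivAt e (r t - α • e t) t)
    (hNB : ∀ t, HasDerivAt NB (NB' t) t)
    (hNB'cont : Continuous NB')
    (hNBbd : ∀ t, 0 ≤ t → ‖NB t‖ ≤ γ₁)
    (hNB'bd : ∀ t, 0 ≤ t → ‖NB' t‖ ≤ γ₂)
    (L P : ℝ → ℝ)
    (hL : ∀ t, L t = ∑ i, r t i * (NB t i - β * Real.sign (e t i)))
    (hP : ∀ t, P t = β * (∑ i, |e 0 i|) - (∑ i, e 0 i * NB 0 i) - ∫ s in (0:ℝ)..t, L s)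
    (hgain : β > γ₁ + γ₂ / α) :
    ∀ t, 0 ≤ t → 0 ≤ P t :=
  stmt8_general α β γ₁ γ₂ hα e r NB NB' he hNB hNBbd hNB'bd L P hL hP hgain
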